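/- Fix a set X and a subset B ⊆ X, and consider the semigroup PT(X,B) = {f : X ⇀ X : ran(f) ⊆ B} of partial self-maps of X with image contained in B, under composition of partial functions. Then an element f ∈ PT(X,B) is regular in PT(X,B) (i.e., there exists g : X ⇀ X with ran(g) ⊆ B and f = f⬝g⬝f) if and only if B saturates ker(f), i.e., for every x ∈ dom(f) there exists y ∈ B with y ∈ dom(f) and f(y) = f(x). Moreover, the set of regular elements of PT(X,B) is closed under composition (it is a subsemigroup). -/

import Mathlib

/-- `f` is a regular element of the semigroup `PT(X,B)` of partial self-maps of `X` with image
contained in `B`, under composition: `ran f ⊆ B` and `f = f⬝g⬝f` for some `g` with `ran g ⊆ B`. -/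
def RegPTXB {X : Type*} (B : Set X) (f : X →. X) : Prop :=
  f.ran ⊆ B ∧ ∃ g : X →. X, g.ran ⊆ B ∧ f = f.comp (g.comp f)

/-!
If `f = f⬝g⬝f` with `ran g ⊆ B`, then for `x ∈ dom f` the point `y = g(f x)` lies in
`B` and has `f y = f x`. Conversely, if every kernel class of `f` meets `B`, let `g` send each
`b ∈ ran f` to some `y ∈ B` with `f y = b`; then `f⬝g⬝f = f`. Saturation of `ker f` by `B` passes
to `f⬝g` for any `g`, since `ker f ⊆ ker (f⬝g)` and `dom (f⬝g) ⊆ dom f`, which gives closure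
under composition.
-/

namespace PFun

variable {α β γ : Type*}

theorem mem_comp_iff {f : β →. γ} {g : α →. β} {a : α} {c : γ} :
    c ∈ f.comp g a ↔ ∃ b ∈ g a, c ∈ f b :=
  Part.mem_bind_iff

theorem ran_comp_subset (f : β →. γ) (g : α →. β) : (f.comp g).ran ⊆ f.ran := by
  rintro c ⟨a, hc⟩
  obtain ⟨b, -, hcb⟩ := mem_comp_iff.1 hc
  exact ⟨b, hcb⟩

def SaturatesKer (B : Set α) (f : α →. β) : Prop :=
  ∀ x ∈ f.Dom, ∃ y ∈ B, y ∈ f.Dom ∧ f y = f x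

theorem saturatesKer_of_eq_comp_comp {B : Set α} {f : α →. β} {g : β →. α} (hg : g.ran ⊆ B)
    (hfgf : f = f.comp (g.comp f)) : SaturatesKer B f := by
  intro x hx
  obtain ⟨b, hb⟩ := Part.dom_iff_mem.1 hx
  have hb' : b ∈ f.comp (g.comp f) x := hfgf ▸ hb
  obtain ⟨y, hy, hby⟩ := mem_comp_iff.1 hb'
  obtain ⟨a, -, hya⟩ := mem_comp_iff.1 hy
  exact ⟨y, hg ⟨a, hya⟩, Part.dom_iff_mem.2 ⟨b, hby⟩,
    by rw [Part.eq_some_iff.2 hby, Part.eq_some_iff.2 hb]⟩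

noncomputable def choosePreimageIn (B : Set α) (f : α →. β) : β →. α :=
  fun b => ⟨∃ y ∈ B, f y = Part.some b, fun h => h.choose⟩

theorem choosePreimageIn_spec {B : Set α} {f : α →. β} {b : β} {y : α}
    (hy : y ∈ choosePreimageIn B f b) : y ∈ B ∧ f y = Part.some b := by
  obtain ⟨h, rfl⟩ := hy
  exact h.choose_spec

theorem ran_choosePreimageIn_subset (B : Set α) (f : α →. β) : (choosePreimageIn B f).ran ⊆ B :=
  fun _ ⟨_, hy⟩ => (choosePreimageIn_spec hy).1

theorem SaturatesKer.comp_choosePreimageIn_comp {B : Set α} {f : α →. β}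
    (hf : SaturatesKer B f) : f.comp ((choosePreimageIn B f).comp f) = f := by
  refine ext fun x b => ⟨fun h => ?_, fun hb => ?_⟩
  · obtain ⟨y, hy, hby⟩ := mem_comp_iff.1 h
    obtain ⟨a, ha, hya⟩ := mem_comp_iff.1 hy
    rw [(choosePreimageIn_spec hya).2, Part.mem_some_iff] at hby
    exact hby ▸ ha
  · obtain ⟨y, hyB, -, hyx⟩ := hf x (Part.dom_iff_mem.2 ⟨b, hb⟩)
    have hfy : f y = Part.some b := hyx.trans (Part.eq_some_iff.2 hb)
    have hdom : ∃ y ∈ B, f y = Part.some b := ⟨y, hyB, hfy⟩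
    refine mem_comp_iff.2 ⟨hdom.choose, mem_comp_iff.2 ⟨b, hb, hdom, rfl⟩, ?_⟩
    rw [hdom.choose_spec.2]
    exact Part.mem_some b

theorem exists_ran_subset_and_eq_comp_comp_iff (B : Set α) (f : α →. β) :
    (∃ g : β →. α, g.ran ⊆ B ∧ f = f.comp (g.comp f)) ↔ SaturatesKer B f :=
  ⟨fun ⟨_, hg, hfgf⟩ => saturatesKer_of_eq_comp_comp hg hfgf,
    fun hf => ⟨choosePreimageIn B f, ran_choosePreimageIn_subset B f,
      hf.comp_choosePreimageIn_comp.symm⟩⟩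

theorem SaturatesKer.comp {B : Set α} {f : α →. β} (hf : SaturatesKer B f) (g : β →. γ) :
    SaturatesKer B (g.comp f) := by
  intro x hx
  obtain ⟨c, hc⟩ := Part.dom_iff_mem.1 hx
  obtain ⟨b, hb, hcb⟩ := mem_comp_iff.1 hc
  obtain ⟨y, hyB, -, hyx⟩ := hf x (Part.dom_iff_mem.2 ⟨b, hb⟩)
  refine ⟨y, hyB, Part.dom_iff_mem.2 ⟨c, mem_comp_iff.2 ⟨b, hyx ▸ hb, hcb⟩⟩, ?_⟩
  rw [comp_apply, comp_apply, hyx]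

end PFun

open PFun in
/-- For `f ∈ PT(X,B)` (i.e. `ran f ⊆ B`), `f` is regular in `PT(X,B)` iff
`B` saturates `ker f` (every kernel class of `f` meets `B`); moreover the set of regular
elements of `PT(X,B)` is closed under composition. -/
theorem RegPTXB_iff_and_subsemigroup {X : Type*} (B : Set X) :
    (∀ f : X →. X, f.ran ⊆ B →
      ((∃ g : X →. X, g.ran ⊆ B ∧ f = f.comp (g.comp f)) ↔
        ∀ x ∈ f.Dom, ∃ y ∈ B, y ∈ f.Dom ∧ f y = f x)) ∧
    (∀ f g : X →. X, RegPTXB B f → RegPTXB B g → RegPTXB B (g.comp f)) := by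
  refine ⟨fun f _ => exists_ran_subset_and_eq_comp_comp_iff B f, ?_⟩
  rintro f g ⟨-, hf⟩ ⟨hgB, -⟩
  have hran : (g.comp f).ran ⊆ B := (ran_comp_subset g f).trans hgB
  have hsat : SaturatesKer B f := (exists_ran_subset_and_eq_comp_comp_iff B f).1 hf
  exact ⟨hran, (exists_ran_subset_and_eq_comp_comp_iff B _).2 (hsat.comp g)⟩
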